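/- Let π be a group, Λ = ℤ[π], I = ker(ε : Λ → ℤ), and J = ker(ε₂ : Λ → ℤ/2). If an element u lies both in J² and in I, then u ∈ IJ. -/

import Mathlib

/-- The augmentation map `ε : ℤ[π] → ℤ`, sending every group element to `1`. -/
noncomputable def eps (G : Type*) [Group G] : MonoidAlgebra ℤ G →+* ℤ :=
  (MonoidAlgebra.lift ℤ ℤ G 1).toRingHom

/-- The mod-2 augmentation map `ε₂ : ℤ[π] → ℤ/2`, i.e. `ε` followed by reduction mod 2. -/
noncomputable def eps2 (G : Type*) [Group G] : MonoidAlgebra ℤ G →+* ZMod 2 :=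
  (Int.castRingHom (ZMod 2)).comp (eps G)

/-- The augmentation ideal `I = ker ε`, as a set. -/
def Iset (G : Type*) [Group G] : Set (MonoidAlgebra ℤ G) := {x | eps G x = 0}

/-- The mod-2 augmentation ideal `J = ker ε₂`, as a set. -/
def Jset (G : Type*) [Group G] : Set (MonoidAlgebra ℤ G) := {x | eps2 G x = 0}

/-- The product of two (two-sided) ideals, given as sets: the additive subgroup
generated by products `s * t` with `s ∈ S`, `t ∈ T`. -/
def prodSub {R : Type*} [Ring R] (S T : Set R) : AddSubgroup R :=
  AddSubgroup.closure (Set.image2 (· * ·) S T)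

/-- The product ideal `IJ ⊆ ℤ[π]`. -/
noncomputable def IJ (G : Type*) [Group G] : AddSubgroup (MonoidAlgebra ℤ G) :=
  prodSub (Iset G) (Jset G)

lemma mem_Jset_iff {G : Type*} [Group G] {x : MonoidAlgebra ℤ G} :
    x ∈ Jset G ↔ (2 : ℤ) ∣ eps G x := by
  show eps2 G x = 0 ↔ _
  simp [eps2, ZMod.intCast_zmod_eq_zero_iff_dvd]

lemma two_mem_Jset {G : Type*} [Group G] : (2 : MonoidAlgebra ℤ G) ∈ Jset G := by
  rw [mem_Jset_iff, map_ofNat]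

lemma eps_eq_zero_of_mem_IJ {G : Type*} [Group G] {v : MonoidAlgebra ℤ G}
    (hv : v ∈ IJ G) : eps G v = 0 := by
  have : IJ G ≤ (eps G).toAddMonoidHom.ker := by
    refine AddSubgroup.closure_le _ |>.2 ?_
    rintro _ ⟨s, hs, t, ht, rfl⟩
    have hs' : eps G s = 0 := hs
    show eps G (s * t) = 0
    rw [map_mul, hs', zero_mul]
  exact this hv

lemma decomp {G : Type*} [Group G] {u : MonoidAlgebra ℤ G}
    (hu : u ∈ prodSub (Jset G) (Jset G)) :
    ∃ v ∈ IJ G, ∃ x ∈ Jset G, u = v + 2 * x := by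
  induction hu using AddSubgroup.closure_induction with
  | mem w hw =>
    obtain ⟨s, hs, t, ht, rfl⟩ := hw
    obtain ⟨a, ha⟩ := mem_Jset_iff.1 hs
    refine ⟨(s - (2 * a : ℤ) • 1) * t, ?_, (a : ℤ) • t, ?_, ?_⟩
    · apply AddSubgroup.subset_closure
      refine ⟨s - (2 * a : ℤ) • 1, ?_, t, ht, rfl⟩
      show eps G _ = 0
      rw [map_sub, map_zsmul, map_one, ← ha]
      simp
    · rw [mem_Jset_iff, map_zsmul, smul_eq_mul]
      exact Dvd.dvd.mul_left (mem_Jset_iff.1 ht) a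
    · rw [sub_mul, smul_mul_assoc, one_mul, mul_smul_comm,
        show (2 : MonoidAlgebra ℤ G) * t = (2 : ℤ) • t by
          simp [two_smul, two_mul],
        smul_smul, mul_comm a 2]
      abel
  | zero => exact ⟨0, (IJ G).zero_mem, 0, by simp [Jset, Set.mem_setOf_eq], by simp⟩
  | add y z _ _ hy hz =>
    obtain ⟨v1, hv1, x1, hx1, rfl⟩ := hy
    obtain ⟨v2, hv2, x2, hx2, rfl⟩ := hz
    refine ⟨v1 + v2, (IJ G).add_mem hv1 hv2, x1 + x2, ?_, by rw [mul_add]; abel⟩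
    simp only [Jset, Set.mem_setOf_eq] at hx1 hx2 ⊢
    rw [map_add, hx1, hx2, add_zero]
  | neg y _ hy =>
    obtain ⟨v, hv, x, hx, rfl⟩ := hy
    refine ⟨-v, (IJ G).neg_mem hv, -x, ?_, by rw [mul_neg]; abel⟩
    simp only [Jset, Set.mem_setOf_eq] at hx ⊢
    rw [map_neg, hx, neg_zero]

/-- if `u ∈ J²` and `u ∈ I`, then `u ∈ IJ`. -/
theorem stmt5 (G : Type*) [Group G] (u : MonoidAlgebra ℤ G)
    (huJ2 : u ∈ prodSub (Jset G) (Jset G)) (huI : eps G u = 0) :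
    u ∈ IJ G := by
  obtain ⟨v, hv, x, hx, rfl⟩ := decomp huJ2
  have hvI : eps G v = 0 := eps_eq_zero_of_mem_IJ hv
  have hx0 : eps G x = 0 := by
    have h := huI
    rw [map_add, hvI, zero_add, map_mul, map_ofNat] at h
    linarith
  refine (IJ G).add_mem hv ?_
  rw [show (2 : MonoidAlgebra ℤ G) * x = x * 2 from ((Commute.ofNat_right x 2).eq).symm]
  exact AddSubgroup.subset_closure ⟨x, hx0, 2, two_mem_Jset, rfl⟩
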